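/- arXiv:0902.1944 — 3 statements merged into one kernel-verified Lean document; each statement's English description precedes it below -/
import Mathlib

section
/- Let X be a topological space in which every point is a Gδ set (an intersection of countably many open sets). If TWO has a winning strategy in the game G₁^{ω₁}(𝒪,𝒪) on X, then the cardinality of X is at most 2^{ℵ₀}. -/
open Set

/-- `𝒰` is an open cover of the space `X`. -/
def IsOpenCover {X : Type} [TopologicalSpace X] (𝒰 : Set (Set X)) : Prop :=
  (∀ U ∈ 𝒰, IsOpen U) ∧ ⋃₀ 𝒰 = Set.univ

/-- TWO has a winning strategy in the length-ω₁ game `G₁^{ω₁}(𝒪,𝒪)`. -/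
def TwoHasWinningStrategy (X : Type) [TopologicalSpace X] : Prop :=
  ∃ σ : (Ordinal.{0} → Set (Set X)) → Ordinal.{0} → Set X,
    (∀ f g : Ordinal.{0} → Set (Set X), ∀ β : Ordinal.{0},
        (∀ γ ≤ β, f γ = g γ) → σ f β = σ g β) ∧
    ∀ f : Ordinal.{0} → Set (Set X),
      (∀ β < (Cardinal.aleph.{0} 1).ord, IsOpenCover (f β)) →
        (∀ β < (Cardinal.aleph.{0} 1).ord, σ f β ∈ f β) ∧
          (⋃ β < (Cardinal.aleph.{0} 1).ord, σ f β) = Set.univ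


/-!
Galvin's argument. Against a winning strategy of TWO, at every position of length `β < ω₁`
there is a point `x` every neighbourhood of which ONE can force: some move of ONE makes TWO
answer inside it. Otherwise ONE would play the cover by the neighbourhoods that cannot be
forced, and TWO's answer, a member of that cover, would be forced after all.
Writing `{x} = ⋂ₙ Uₙ(x)`, forcing `Uₙ(x)` for each `n` spans a tree of plays that branches over
`ℕ` at each inning below `ω₁`, with such a point at every node; there are at most
`ℵ₁ · ℵ₀^ℵ₀ = 𝔠` nodes. If a point `z` were missed by all of them, ONE could climb the tree
choosing at each node an `Uₙ(x)` that avoids `z`; then no answer of TWO contains `z`, and TWO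
loses this play.
-/

open Cardinal
open scoped Ordinal

section PrefixRecursion

variable {ι α : Type*}

open Classical in
noncomputable def extendPrefix [LT ι] {i : ι} (p : ∀ j < i, α) (a : α) : ι → α :=
  fun j => if h : j < i then p j h else a

theorem extendPrefix_of_lt [LT ι] {i j : ι} (p : ∀ j < i, α) (a : α) (h : j < i) :
    extendPrefix p a j = p j h := dif_pos h

theorem extendPrefix_of_not_lt [LT ι] {i j : ι} (p : ∀ j < i, α) (a : α) (h : ¬j < i) :
    extendPrefix p a j = a := dif_neg h

theorem extendPrefix_self [Preorder ι] {i : ι} (p : ∀ j < i, α) (a : α) :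
    extendPrefix p a i = a := extendPrefix_of_not_lt p a (lt_irrefl i)

variable [LT ι] [WellFoundedLT ι]

theorem exists_seq_forall_of_exists [Nonempty α] {R : ι → (ι → α) → α → Prop}
    (hR : ∀ i b b' a, (∀ j < i, b j = b' j) → R i b a → R i b' a)
    (h : ∀ i b, ∃ a, R i b a) : ∃ b : ι → α, ∀ i, R i b (b i) := by
  choose c hc using h
  refine ⟨WellFoundedLT.fix fun i p => c i (extendPrefix p (Classical.arbitrary α)), fun i => ?_⟩
  rw [WellFoundedLT.fix_eq]
  exact hR i _ _ _ (fun j hj => extendPrefix_of_lt _ _ hj) (hc i _)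

end PrefixRecursion

section Tree

variable {ι κ α X : Type*} [PartialOrder ι] [WellFoundedLT ι]

def branchRun (C : ∀ i : ι, (∀ j < i, α) → κ → α) (b : ι → κ) : ι → α :=
  WellFoundedLT.fix fun i p => C i p (b i)

def branchPoint (G : ∀ i : ι, (∀ j < i, α) → X) (C : ∀ i : ι, (∀ j < i, α) → κ → α)
    (b : ι → κ) (i : ι) : X :=
  G i fun j _ => branchRun C b j

variable {C : ∀ i : ι, (∀ j < i, α) → κ → α} {b b' : ι → κ}

theorem branchRun_eq (i : ι) : branchRun C b i = C i (fun j _ => branchRun C b j) (b i) :=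
  WellFoundedLT.fix_eq _ i

theorem branchRun_congr {i : ι} (h : ∀ j ≤ i, b j = b' j) :
    branchRun C b i = branchRun C b' i := by
  induction i using WellFoundedLT.induction with
  | _ i ih =>
    rw [branchRun_eq, branchRun_eq, h i le_rfl]
    congr
    funext j hj
    exact ih j hj fun k hk => h k (hk.trans hj.le)

theorem branchPoint_congr (G : ∀ i : ι, (∀ j < i, α) → X) {i : ι} (h : ∀ j < i, b j = b' j) :
    branchPoint G C b i = branchPoint G C b' i := by
  unfold branchPoint
  congr
  funext j hj
  exact branchRun_congr fun k hk => h k (hk.trans_lt hj)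

theorem branchRun_eq_extendPrefix {i j : ι} (hj : j ≤ i) :
    branchRun C b j =
      extendPrefix (fun k (_ : k < i) => branchRun C b k)
        (C i (fun k _ => branchRun C b k) (b i)) j := by
  rcases hj.lt_or_eq with hj | rfl
  · rw [extendPrefix_of_lt _ _ hj]
  · rw [extendPrefix_self, branchRun_eq]

theorem exists_branch_forall_notMem {U : X → ℕ → Set X} (hU : ∀ x, ⋂ n, U x n = {x})
    (G : ∀ i : ι, (∀ j < i, α) → X) {C : ∀ i : ι, (∀ j < i, α) → ℕ → α} {o : ι} {z : X}
    (hz : ∀ b, ∀ i < o, branchPoint G C b i ≠ z) :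
    ∃ b : ι → ℕ, ∀ i < o, z ∉ U (branchPoint G C b i) (b i) := by
  refine exists_seq_forall_of_exists (R := fun i b n => i < o → z ∉ U (branchPoint G C b i) n)
    (fun i b b' n h hR hi => branchPoint_congr G h ▸ hR hi) fun i b => ?_
  by_cases hi : i < o
  · have : z ∉ ⋂ n, U (branchPoint G C b i) n := by rw [hU]; exact (hz b i hi).symm
    simpa [hi] using this
  · exact ⟨0, fun h => absurd h hi⟩

end Tree

theorem mk_sigma_Iio_omega_one_arrow_nat_le :
    #(Σ β : Iio (ω₁ : Ordinal.{0}), (Iio β.1 → ℕ)) ≤ lift.{1, 0} 𝔠 := by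
  have hterm (β : Iio (ω₁ : Ordinal.{0})) : #(Iio β.1 → ℕ) ≤ lift.{1, 0} 𝔠 := by
    have hβ : #(Iio β.1) ≤ lift.{1, 0} ℵ₀ := by
      rw [mk_Iio_ordinal, lift_le, ← lt_aleph_one_iff, ← lt_omega_iff_card_lt]
      exact β.2
    calc #(Iio β.1 → ℕ) = lift.{1, 0} ℵ₀ ^ #(Iio β.1) := by rw [mk_arrow, mk_nat, lift_uzero]
      _ ≤ lift.{1, 0} ℵ₀ ^ lift.{1, 0} ℵ₀ := power_le_power_left (by simp [aleph0_ne_zero]) hβ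
      _ = lift.{1, 0} 𝔠 := by rw [← lift_power, aleph0_power_aleph0]
  calc #(Σ β : Iio (ω₁ : Ordinal.{0}), (Iio β.1 → ℕ))
      ≤ sum fun _ : Iio (ω₁ : Ordinal.{0}) => lift.{1, 0} 𝔠 := by
        rw [mk_sigma]; exact sum_le_sum _ _ hterm
    _ = lift.{1, 0} (ℵ₁ * 𝔠) := by rw [sum_const', mk_Iio_ordinal, Ordinal.card_omega, lift_mul]
    _ = lift.{1, 0} 𝔠 := by
      rw [mul_eq_right aleph0_le_continuum aleph_one_le_continuum (aleph_pos 1).ne']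

section Game

variable {X : Type} [TopologicalSpace X] {σ : (Ordinal.{0} → Set (Set X)) → Ordinal.{0} → Set X}

abbrev OpenCovers (X : Type) [TopologicalSpace X] := {𝒰 : Set (Set X) // IsOpenCover 𝒰}

instance : Nonempty (OpenCovers X) :=
  ⟨⟨{Set.univ}, by simp, sUnion_singleton _⟩⟩

def IsWinningForTwo (σ : (Ordinal.{0} → Set (Set X)) → Ordinal.{0} → Set X) : Prop :=
  ∀ f : Ordinal.{0} → Set (Set X), (∀ β < ω₁, IsOpenCover (f β)) →
    (∀ β < ω₁, σ f β ∈ f β) ∧ (⋃ β < ω₁, σ f β) = Set.univ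

theorem IsWinningForTwo.exists_forcing_point (hσ : IsWinningForTwo σ) {β : Ordinal}
    (hβ : β < ω₁) (p : ∀ γ < β, OpenCovers X) :
    ∃ x, ∀ V, IsOpen V → x ∈ V →
      ∃ 𝒰 : OpenCovers X, σ (Subtype.val ∘ extendPrefix p 𝒰) β ⊆ V := by
  by_contra! h
  choose V hVo hxV hV using h
  let 𝒱 : OpenCovers X :=
    ⟨range V, forall_mem_range.2 hVo, eq_univ_of_forall fun x => mem_sUnion_of_mem (hxV x) ⟨x, rfl⟩⟩
  obtain ⟨x, hx⟩ : σ (Subtype.val ∘ extendPrefix p 𝒱) β ∈ range V := by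
    have hmem := (hσ _ fun γ _ => (extendPrefix p 𝒱 γ).2).1 β hβ
    rwa [extendPrefix_self] at hmem
  exact hV x 𝒱 hx.ge

theorem IsWinningForTwo.exists_forcing_tree [Nonempty X] (hσ : IsWinningForTwo σ)
    {N : X → ℕ → Set X} (hNo : ∀ x n, IsOpen (N x n)) (hN : ∀ x n, x ∈ N x n) :
    ∃ (G : ∀ β : Ordinal.{0}, (∀ γ < β, OpenCovers X) → X)
      (C : ∀ β : Ordinal.{0}, (∀ γ < β, OpenCovers X) → ℕ → OpenCovers X),
      ∀ β < ω₁, ∀ p n, σ (Subtype.val ∘ extendPrefix p (C β p n)) β ⊆ N (G β p) n := by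
  have (β : Ordinal.{0}) (p : ∀ γ < β, OpenCovers X) : ∃ x, ∀ n, ∃ 𝒰 : OpenCovers X,
      β < ω₁ → σ (Subtype.val ∘ extendPrefix p 𝒰) β ⊆ N x n := by
    by_cases hβ : β < ω₁
    · obtain ⟨x, hx⟩ := hσ.exists_forcing_point hβ p
      exact ⟨x, fun n => (hx _ (hNo x n) (hN x n)).imp fun _ h _ => h⟩
    · exact ⟨Classical.arbitrary X, fun _ => ⟨Classical.arbitrary _, fun h => absurd h hβ⟩⟩
  choose G C hGC using this
  exact ⟨G, C, fun β hβ p n => hGC β p n hβ⟩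

theorem IsWinningForTwo.surjective_branchPoint (hσ : IsWinningForTwo σ)
    (hpast : ∀ f g β, (∀ γ ≤ β, f γ = g γ) → σ f β = σ g β)
    {U : X → ℕ → Set X} (hU : ∀ x, ⋂ n, U x n = {x})
    {G : ∀ β : Ordinal.{0}, (∀ γ < β, OpenCovers X) → X}
    {C : ∀ β : Ordinal.{0}, (∀ γ < β, OpenCovers X) → ℕ → OpenCovers X}
    (hGC : ∀ β < ω₁, ∀ p n, σ (Subtype.val ∘ extendPrefix p (C β p n)) β ⊆ U (G β p) n) :
    Function.Surjective fun c : Σ β : Iio (ω₁ : Ordinal.{0}), (Iio β.1 → ℕ) =>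
      branchPoint G C (extendPrefix (fun γ h => c.2 ⟨γ, h⟩) 0) c.1 := by
  intro z
  by_contra! hz
  have hne (b : Ordinal → ℕ) (β) (hβ : β < ω₁) : branchPoint G C b β ≠ z := by
    rw [← branchPoint_congr G (b := extendPrefix (fun γ _ => b γ) 0) fun γ hγ =>
      extendPrefix_of_lt _ _ hγ]
    exact hz ⟨⟨β, hβ⟩, fun γ => b γ⟩
  obtain ⟨b, hb⟩ := exists_branch_forall_notMem hU G hne
  obtain ⟨β, hβ, hzβ⟩ :=
    mem_iUnion₂.1 ((hσ _ fun γ _ => (branchRun C b γ).2).2.symm ▸ mem_univ z)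
  rw [hpast _ _ β fun γ hγ => congrArg Subtype.val (branchRun_eq_extendPrefix hγ)] at hzβ
  exact hb β hβ (hGC β hβ _ _ hzβ)

end Game

theorem stmt1 (X : Type) [TopologicalSpace X]
    (hGδ : ∀ x : X, ∃ U : ℕ → Set X, (∀ n, IsOpen (U n)) ∧ (⋂ n, U n) = {x})
    (h : TwoHasWinningStrategy X) :
    Cardinal.mk X ≤ 2 ^ Cardinal.aleph0 := by
  rcases isEmpty_or_nonempty X with hX | hX
  · simp
  obtain ⟨σ, hpast, hwin⟩ := h
  have hσ : IsWinningForTwo σ := by rw [IsWinningForTwo, ← ord_aleph]; exact hwin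
  choose U hUo hU using hGδ
  obtain ⟨G, C, hGC⟩ := IsWinningForTwo.exists_forcing_tree hσ hUo fun x n =>
    mem_iInter.1 ((hU x).symm ▸ mem_singleton x) n
  have := lift_mk_le_lift_mk_of_surjective (hσ.surjective_branchPoint hpast hU hGC)
  rw [two_power_aleph0, ← lift_le.{1}]
  exact this.trans (lift_uzero _ ▸ mk_sigma_Iio_omega_one_arrow_nat_le)
end

section
/- Let S be an infinite set and f a function assigning to each nonprincipal ultrafilter 𝒰 on S a set f(𝒰) ∈ 𝒰. Then there are finitely many nonprincipal ultrafilters 𝒰₁, …, 𝒰_n on S such that S \ (f(𝒰₁) ∪ ⋯ ∪ f(𝒰_n)) is finite. -/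
/-!
The nonprincipal ultrafilters form a closed, hence compact, subset of the Stone–Čech space
`Ultrafilter S`, and the basic open sets `{𝒱 | f 𝒰 ∈ 𝒱}` cover it. A finite subcover indexed by
`𝒰₁, …, 𝒰ₙ` does the job: if the complement of `f 𝒰₁ ∪ ⋯ ∪ f 𝒰ₙ` were infinite, some nonprincipal
ultrafilter would contain it, and that ultrafilter lies in none of the covering sets.
-/

open Set Filter

namespace Ultrafilter

variable {α : Type*}

theorem forall_ne_pure_iff_le_cofinite (𝒰 : Ultrafilter α) :
    (∀ a, 𝒰 ≠ pure a) ↔ (𝒰 : Filter α) ≤ cofinite := by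
  refine ⟨fun h => (le_cofinite_or_eq_pure 𝒰).resolve_right fun ⟨a, ha⟩ => h a ha, ?_⟩
  rintro h a rfl
  simpa using le_cofinite_iff_compl_singleton_mem.1 h a

theorem isClosed_setOf_le_cofinite : IsClosed {𝒰 : Ultrafilter α | (𝒰 : Filter α) ≤ cofinite} := by
  simp_rw [le_def, ofPred_forall]
  exact isClosed_biInter fun s _ => ultrafilter_isClosed_basic s

theorem exists_le_cofinite_of_infinite {s : Set α} (hs : s.Infinite) :
    ∃ 𝒰 : Ultrafilter α, (𝒰 : Filter α) ≤ cofinite ∧ s ∈ 𝒰 := by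
  have := hs.cofinite_inf_principal_neBot
  obtain ⟨𝒰, h𝒰⟩ := exists_le (cofinite ⊓ 𝓟 s)
  exact ⟨𝒰, h𝒰.trans inf_le_left, h𝒰.trans inf_le_right (mem_principal_self s)⟩

theorem exists_finset_compl_biUnion_finite (f : Ultrafilter α → Set α)
    (hf : ∀ 𝒰 : Ultrafilter α, (𝒰 : Filter α) ≤ cofinite → f 𝒰 ∈ 𝒰) :
    ∃ T : Finset (Ultrafilter α), (∀ 𝒰 ∈ T, (𝒰 : Filter α) ≤ cofinite) ∧
      (⋃ 𝒰 ∈ T, f 𝒰)ᶜ.Finite := by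
  obtain ⟨T, hT, hcover⟩ := isClosed_setOf_le_cofinite.isCompact.elim_nhds_subcover
    (fun 𝒰 => {𝒱 | f 𝒰 ∈ 𝒱}) fun 𝒰 h𝒰 => (ultrafilter_isOpen_basic _).mem_nhds (hf 𝒰 h𝒰)
  refine ⟨T, hT, not_not.1 fun hinf => ?_⟩
  obtain ⟨𝒱, h𝒱, hcompl⟩ := exists_le_cofinite_of_infinite hinf
  obtain ⟨𝒰, h𝒰T, hf𝒰⟩ := mem_iUnion₂.1 (hcover h𝒱)
  exact 𝒱.compl_notMem_iff.2 hf𝒰 <|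
    mem_of_superset hcompl (compl_subset_compl.2 (subset_biUnion_of_mem h𝒰T))

end Ultrafilter

theorem stmt12_general (S : Type*) (f : Ultrafilter S → Set S)
    (hf : ∀ 𝒰 : Ultrafilter S, (∀ a : S, 𝒰 ≠ pure a) → f 𝒰 ∈ 𝒰) :
    ∃ T : Finset (Ultrafilter S), (∀ 𝒰 ∈ T, ∀ a : S, 𝒰 ≠ pure a) ∧
      (Set.univ \ ⋃ 𝒰 ∈ T, f 𝒰).Finite := by
  simp only [Ultrafilter.forall_ne_pure_iff_le_cofinite, ← compl_eq_univ_sdiff] at hf ⊢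
  exact Ultrafilter.exists_finset_compl_biUnion_finite f hf

theorem stmt12 (S : Type*) [Infinite S] (f : Ultrafilter S → Set S)
    (hf : ∀ 𝒰 : Ultrafilter S, (∀ a : S, 𝒰 ≠ pure a) → f 𝒰 ∈ 𝒰) :
    ∃ T : Finset (Ultrafilter S), (∀ 𝒰 ∈ T, ∀ a : S, 𝒰 ≠ pure a) ∧
      (Set.univ \ ⋃ 𝒰 ∈ T, f 𝒰).Finite :=
  stmt12_general S f hf
end

section
/- Let λ be an uncountable cardinal and X a Lindelöf subspace of [0,1]^λ. For every Gδ set G ⊆ [0,1]^λ with X ⊆ G there exist a Gδ set H and a countable set C ⊆ λ such that X ⊆ H ⊆ G and H = π_C^{-1}[π_C[H]], i.e., H is a cylinder over its projection to the coordinates in C (hence homeomorphic to π_C[H] × [0,1]^{λ∖C}). -/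
/-!
Each open set containing a Lindelöf set `X` contains a countable union of basic open boxes
covering `X`; such a union depends only on the countably many coordinates its boxes restrict.
A Gδ set is handled by doing this for each of its countably many open sets and intersecting.
-/

open Set

variable {ι : Type*} {α : ι → Type*}

/-- The paper's condition `S = π_C⁻¹[π_C[S]]`. -/
def IsCylinderOver (C : Set ι) (S : Set (∀ i, α i)) : Prop :=
  ∀ f g, f ∈ S → (∀ i ∈ C, f i = g i) → g ∈ S

namespace IsCylinderOver

theorem mono {C D : Set ι} {S : Set (∀ i, α i)} (hS : IsCylinderOver C S) (hCD : C ⊆ D) :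
    IsCylinderOver D S :=
  fun f g hf hfg => hS f g hf fun i hi => hfg i (hCD hi)

theorem pi (I : Set ι) (u : ∀ i, Set (α i)) : IsCylinderOver I (I.pi u) :=
  fun _ _ hf hfg i hi => hfg i hi ▸ hf i hi

theorem iUnion {κ : Sort*} {C : κ → Set ι} {S : κ → Set (∀ i, α i)}
    (hS : ∀ k, IsCylinderOver (C k) (S k)) : IsCylinderOver (⋃ k, C k) (⋃ k, S k) := by
  intro f g hf hfg
  obtain ⟨k, hfk⟩ := mem_iUnion.mp hf
  exact mem_iUnion.mpr ⟨k, (hS k).mono (subset_iUnion C k) f g hfk hfg⟩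

theorem iInter {κ : Sort*} {C : κ → Set ι} {S : κ → Set (∀ i, α i)}
    (hS : ∀ k, IsCylinderOver (C k) (S k)) : IsCylinderOver (⋃ k, C k) (⋂ k, S k) :=
  fun f g hf hfg => mem_iInter.mpr fun k =>
    (hS k).mono (subset_iUnion C k) f g (mem_iInter.mp hf k) hfg

end IsCylinderOver

variable [∀ i, TopologicalSpace (α i)] {X : Set (∀ i, α i)}

theorem IsLindelof.exists_isOpen_cylinder_between (hX : IsLindelof X) {U : Set (∀ i, α i)}
    (hU : IsOpen U) (hXU : X ⊆ U) :
    ∃ (V : Set (∀ i, α i)) (C : Set ι),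
      C.Countable ∧ IsOpen V ∧ X ⊆ V ∧ V ⊆ U ∧ IsCylinderOver C V := by
  have hbox : ∀ f : X, ∃ (I : Finset ι) (u : ∀ i, Set (α i)),
      (∀ i ∈ I, IsOpen (u i) ∧ (f : ∀ i, α i) i ∈ u i) ∧ (I : Set ι).pi u ⊆ U :=
    fun f => isOpen_pi_iff.mp hU f (hXU f.2)
  choose I u hu hboxU using hbox
  have hboxOpen : ∀ f : X, IsOpen ((I f : Set ι).pi (u f)) := fun f =>
    isOpen_set_pi (I f).finite_toSet fun i hi => (hu f i hi).1
  have hcover : X ⊆ ⋃ f : X, (I f : Set ι).pi (u f) := fun x hx =>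
    mem_iUnion.mpr ⟨⟨x, hx⟩, fun i hi => (hu ⟨x, hx⟩ i hi).2⟩
  obtain ⟨t, htc, htcover⟩ := hX.elim_countable_subcover _ hboxOpen hcover
  refine ⟨⋃ f ∈ t, (I f : Set ι).pi (u f), ⋃ f ∈ t, (I f : Set ι),
    htc.biUnion fun f _ => (I f).countable_toSet, isOpen_biUnion fun f _ => hboxOpen f,
    htcover, iUnion₂_subset fun f _ => hboxU f, ?_⟩
  exact IsCylinderOver.iUnion fun f => IsCylinderOver.iUnion fun _ => IsCylinderOver.pi _ _

theorem IsLindelof.exists_isGδ_cylinder_between (hX : IsLindelof X) {G : Set (∀ i, α i)}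
    (hG : IsGδ G) (hXG : X ⊆ G) :
    ∃ (H : Set (∀ i, α i)) (C : Set ι),
      C.Countable ∧ IsGδ H ∧ X ⊆ H ∧ H ⊆ G ∧ IsCylinderOver C H := by
  obtain ⟨T, hTopen, hTc, rfl⟩ := hG
  have : Countable T := hTc.to_subtype
  choose V C hCc hVopen hXV hVU hcyl using fun U : T =>
    hX.exists_isOpen_cylinder_between (hTopen U U.2) fun x hx => mem_sInter.mp (hXG hx) U U.2
  refine ⟨⋂ U, V U, ⋃ U, C U, countable_iUnion hCc, .iInter fun U => (hVopen U).isGδ,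
    subset_iInter hXV, fun x hx U hU => hVU ⟨U, hU⟩ (mem_iInter.mp hx _),
    IsCylinderOver.iInter hcyl⟩

theorem stmt16_general (ι : Type)
    (X G : Set (ι → Set.Icc (0:ℝ) 1)) (hX : IsLindelof X)
    (hG : IsGδ G) (hXG : X ⊆ G) :
    ∃ (H : Set (ι → Set.Icc (0:ℝ) 1)) (C : Set ι), C.Countable ∧ IsGδ H ∧
      X ⊆ H ∧ H ⊆ G ∧
      ∀ f g : ι → Set.Icc (0:ℝ) 1, f ∈ H → (∀ i ∈ C, f i = g i) → g ∈ H :=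
  hX.exists_isGδ_cylinder_between hG hXG

theorem stmt16 (ι : Type) (hι : Cardinal.aleph0 < Cardinal.mk ι)
    (X G : Set (ι → Set.Icc (0:ℝ) 1)) (hX : IsLindelof X)
    (hG : IsGδ G) (hXG : X ⊆ G) :
    ∃ (H : Set (ι → Set.Icc (0:ℝ) 1)) (C : Set ι), C.Countable ∧ IsGδ H ∧
      X ⊆ H ∧ H ⊆ G ∧
      ∀ f g : ι → Set.Icc (0:ℝ) 1, f ∈ H → (∀ i ∈ C, f i = g i) → g ∈ H :=
  stmt16_general ι X G hX hG hXG
end
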